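/- Let M ∈ M_2(ℤ) be an expanding matrix with det(M) odd, and let D = {(0,0)^t, (α₁,α₂)^t, (β₁,β₂)^t, (−α₁−β₁, −α₂−β₂)^t} ⊂ ℤ² with α₁β₂ − α₂β₁ odd. Then L²(μ_{M,D}) contains at most 4 mutually orthogonal exponential functions. -/

import Mathlib

open MeasureTheory Matrix Set Complex
open scoped Real Pointwise ENNReal

noncomputable section

namespace SA

variable {n : ℕ}

/-- Cast an integer matrix to a real matrix. -/
def toR (M : Matrix (Fin n) (Fin n) ℤ) : Matrix (Fin n) (Fin n) ℝ :=
  M.map (Int.cast : ℤ → ℝ)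

/-- Cast an integer vector to a real vector. -/
def vecR (d : Fin n → ℤ) : Fin n → ℝ := fun i => (d i : ℝ)

/-- A real matrix is expanding if all of its complex eigenvalues have modulus > 1. -/
def IsExpandingR (M : Matrix (Fin n) (Fin n) ℝ) : Prop :=
  ∀ z : ℂ, (M.map (Complex.ofReal)).charpoly.IsRoot z → 1 < ‖z‖

/-- An integer matrix is expanding if all of its complex eigenvalues have modulus > 1. -/
def IsExpanding (M : Matrix (Fin n) (Fin n) ℤ) : Prop :=
  IsExpandingR (toR M)

/-- Standard inner product on `ℝ^n`. -/
def dotR (x y : Fin n → ℝ) : ℝ := ∑ i, x i * y i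

/-- The exponential function `e_λ(x) = e^{2πi⟨λ,x⟩}`. -/
def expFun (lam : Fin n → ℝ) : (Fin n → ℝ) → ℂ :=
  fun x => Complex.exp (2 * Real.pi * Complex.I * (dotR lam x))

/-- Mask polynomial of a finite real digit set. -/
def maskR (D : Finset (Fin n → ℝ)) (x : Fin n → ℝ) : ℂ :=
  (D.card : ℂ)⁻¹ * ∑ d ∈ D, Complex.exp (2 * Real.pi * Complex.I * (dotR d x))

/-- Zero set of the mask polynomial of a real digit set. -/
def maskZR (D : Finset (Fin n → ℝ)) : Set (Fin n → ℝ) := {x | maskR D x = 0}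

/-- Mask polynomial of a finite integer digit set. -/
def mask (D : Finset (Fin n → ℤ)) (x : Fin n → ℝ) : ℂ :=
  (D.card : ℂ)⁻¹ * ∑ d ∈ D, Complex.exp (2 * Real.pi * Complex.I * (dotR (vecR d) x))

/-- Zero set `Z(m_D)` of the mask polynomial of an integer digit set. -/
def maskZ (D : Finset (Fin n → ℤ)) : Set (Fin n → ℝ) := {x | mask D x = 0}

/-- `Z_D^n := Z(m_D) ∩ [0,1)^n`. -/
def ZDn (D : Finset (Fin n → ℤ)) : Set (Fin n → ℝ) :=
  maskZ D ∩ {x | ∀ i, 0 ≤ x i ∧ x i < 1}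

/-- `E̊_p^n := (1/p){(l₁,…,l_n) : 0 ≤ lᵢ ≤ p-1} \ {0}`. -/
def Ering (p n : ℕ) : Set (Fin n → ℝ) :=
  {x | (∃ l : Fin n → ℕ, (∀ i, l i ≤ p - 1) ∧ ∀ i, x i = (l i : ℝ) / p) ∧ x ≠ 0}

/-- The integer lattice `ℤ^n` inside `ℝ^n`. -/
def latticeZ (n : ℕ) : Set (Fin n → ℝ) := {x | ∀ i, ∃ k : ℤ, x i = (k : ℝ)}

/-- `μ` is the self-affine measure generated by the real expanding matrix `M`
and the real digit set `D`: it is a Borel probability measure satisfying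
`μ = (1/|D|) ∑_{d∈D} μ ∘ φ_d⁻¹` with `φ_d(x) = M⁻¹(x+d)`. -/
def IsSelfAffineR (M : Matrix (Fin n) (Fin n) ℝ) (D : Finset (Fin n → ℝ))
    (μ : Measure (Fin n → ℝ)) : Prop :=
  IsProbabilityMeasure μ ∧
    μ = (D.card : ℝ≥0∞)⁻¹ • ∑ d ∈ D, μ.map (fun x => M⁻¹.mulVec (x + d))

/-- `μ` is the self-affine measure generated by the integer expanding matrix `M`
and the integer digit set `D`. -/
def IsSelfAffine (M : Matrix (Fin n) (Fin n) ℤ) (D : Finset (Fin n → ℤ))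
    (μ : Measure (Fin n → ℝ)) : Prop :=
  IsProbabilityMeasure μ ∧
    μ = (D.card : ℝ≥0∞)⁻¹ • ∑ d ∈ D, μ.map (fun x => (toR M)⁻¹.mulVec (x + vecR d))

/-- Fourier transform `μ̂(ξ) = ∫ e^{2πi⟨x,ξ⟩} dμ(x)`. -/
def FT (μ : Measure (Fin n → ℝ)) (ξ : Fin n → ℝ) : ℂ :=
  ∫ x, Complex.exp (2 * Real.pi * Complex.I * (dotR x ξ)) ∂μ

/-- The family of exponentials `E(Λ)` is mutually orthogonal in `L²(μ)`:
`μ̂(λ - λ') = 0` for all distinct `λ, λ' ∈ Λ`. -/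
def OrthExp (μ : Measure (Fin n → ℝ)) (Λ : Set (Fin n → ℝ)) : Prop :=
  ∀ a ∈ Λ, ∀ b ∈ Λ, a ≠ b → FT μ (a - b) = 0

/-- `Λ` is a spectrum of `μ`: the exponentials `{e^{2πi⟨λ,x⟩} : λ ∈ Λ}` form an
orthonormal (Hilbert) basis of `L²(μ)`. -/
def IsSpectrum (μ : Measure (Fin n → ℝ)) (Λ : Set (Fin n → ℝ)) : Prop :=
  ∃ b : HilbertBasis Λ ℂ (Lp ℂ 2 μ), ∀ l : Λ, (b l : Lp ℂ 2 μ) =ᵐ[μ] expFun (l : Fin n → ℝ)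

/-- `μ` is a spectral measure. -/
def IsSpectralMeasure (μ : Measure (Fin n → ℝ)) : Prop :=
  ∃ Λ : Set (Fin n → ℝ), Λ.Countable ∧ IsSpectrum μ Λ

/-- `(M, D)` is admissible: there is `S ⊂ ℤ^n` with `|S| = |D|` such that
`H = (1/√|S|)[e^{2πi⟨M⁻¹d,s⟩}]_{d∈D,s∈S}` satisfies `H^*H = I`. -/
def Admissible (M : Matrix (Fin n) (Fin n) ℤ) (D : Finset (Fin n → ℤ)) : Prop :=
  ∃ S : Finset (Fin n → ℤ), S.card = D.card ∧
    letI H : Matrix {d // d ∈ D} {s // s ∈ S} ℂ := fun d s =>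
      ((1 : ℂ) / (Real.sqrt S.card : ℂ)) *
        Complex.exp (2 * Real.pi * Complex.I *
          (dotR ((toR M)⁻¹.mulVec (vecR (d : Fin n → ℤ))) (vecR (s : Fin n → ℤ))))
    Hᴴ * H = 1

/-- Two matrices are congruent entrywise modulo `p`. -/
def ModEq (p : ℕ) (A B : Matrix (Fin n) (Fin n) ℤ) : Prop :=
  ∀ i j, (p : ℤ) ∣ (A i j - B i j)

/-- `(M, D)` and `(M̃, D̃)` are conjugate in `GL_n(p)`: there are integer matrices
`A, B` with determinants prime to `p`, `AB ≡ I (mod p)`, `M̃ = AMB`, and either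
`D = B D̃` or `D̃ = A D`. -/
def ConjugateGL (p : ℕ) (M Mt : Matrix (Fin n) (Fin n) ℤ)
    (D Dt : Finset (Fin n → ℤ)) : Prop :=
  ∃ A B : Matrix (Fin n) (Fin n) ℤ,
    ¬ (p : ℤ) ∣ A.det ∧ ¬ (p : ℤ) ∣ B.det ∧ ModEq p (A * B) 1 ∧ Mt = A * M * B ∧
      ((∀ d, d ∈ D ↔ ∃ dt ∈ Dt, d = B.mulVec dt) ∨
       (∀ dt, dt ∈ Dt ↔ ∃ d ∈ D, dt = A.mulVec d))

/-! Iterating `μ̂(ξ) = m_D(Bξ) μ̂(Bξ)` with `B = (M⁻¹)ᵀ`, and using `Bᴺ ξ → 0` (Gelfand's formula,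
`M` being expanding) and `μ̂(0) = 1`, every zero `δ` of `μ̂` has `m_D(Bʲ δ) = 0` for some `j ≥ 1`.
The zeros of `m_D` are the `x` with `2Tx ∈ ℤ² \ (2ℤ)²`, where `T` has rows `α` and `β`. The integer
matrix `R = T adj(Mᵀ) adj(T)` satisfies `R T = (det M det T) T B` and has odd determinant, so it
preserves `ℤ² \ (2ℤ)²`. Lifting the finitely many `j` attached to pairs in `Λ` to a common `N`,
the map `λ ↦ (det M det T)ᴺ T Bᴺ (2λ)` has pairwise differences in `ℤ² \ (2ℤ)²`, so reducing it
mod `2` embeds `Λ` into `(ℤ/2ℤ)²`. -/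

open Filter Topology
open scoped NNReal ComplexConjugate

theorem tendsto_pow_atTop_nhds_zero_of_forall_spectrum_lt_one {A : Type*} [NormedRing A]
    [NormedAlgebra ℂ A] [CompleteSpace A] {a : A} (h : ∀ z ∈ spectrum ℂ a, ‖z‖ < 1) :
    Tendsto (a ^ ·) atTop (𝓝 0) := by
  rcases subsingleton_or_nontrivial A with hA | hA
  · simp [Subsingleton.elim _ (0 : A)]
  have hρ : spectralRadius ℂ a < (1 : ℝ≥0) :=
    spectrum.spectralRadius_lt_of_forall_lt a fun z hz => NNReal.coe_lt_coe.mp (h z hz)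
  obtain ⟨r, hρr, hr1⟩ := ENNReal.lt_iff_exists_nnreal_btwn.mp hρ
  have hev := (spectrum.pow_norm_pow_one_div_tendsto_nhds_spectralRadius a).eventually
    (gt_mem_nhds hρr)
  refine squeeze_zero_norm' ?_ (tendsto_pow_atTop_nhds_zero_of_lt_one r.2 (by exact_mod_cast hr1))
  filter_upwards [hev, eventually_ne_atTop 0] with n hn hn0
  rw [ENNReal.ofReal_lt_iff_lt_toReal (by positivity) (by simp)] at hn
  calc ‖a ^ n‖ = (‖a ^ n‖ ^ (1 / n : ℝ)) ^ n := by
        rw [one_div, Real.rpow_inv_natCast_pow (norm_nonneg _) hn0]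
    _ ≤ (r : ℝ) ^ n := by gcongr; simpa using hn.le

-- any Banach-algebra norm on matrices will do: they all induce the product topology
attribute [local instance] Matrix.linftyOpNormedRing Matrix.linftyOpNormedAlgebra in
theorem Matrix.tendsto_pow_of_forall_mem_spectrum {ι : Type*} [Fintype ι] [DecidableEq ι]
    (A : Matrix ι ι ℂ) (h : ∀ z ∈ spectrum ℂ A, ‖z‖ < 1) :
    Tendsto (A ^ ·) atTop (𝓝 0) :=
  tendsto_pow_atTop_nhds_zero_of_forall_spectrum_lt_one h

theorem IsExpandingR.tendsto_inv_pow {A : Matrix (Fin n) (Fin n) ℝ} (hA : IsExpandingR A) :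
    Tendsto (A⁻¹ ^ ·) atTop (𝓝 0) := by
  set Ac := A.map Complex.ofReal
  have hspec : ∀ z ∈ spectrum ℂ Ac, 1 < ‖z‖ := fun z hz =>
    hA z (Matrix.mem_spectrum_iff_isRoot_charpoly.mp hz)
  have hunit : IsUnit Ac := spectrum.isUnit_of_zero_notMem ℂ fun h0 => by
    have := hspec 0 h0
    norm_num at this
  have hdet : IsUnit A.det := by
    have h := (Matrix.isUnit_iff_isUnit_det Ac).mp hunit
    rw [show Ac.det = A.det from (Complex.ofRealHom.map_det A).symm, isUnit_iff_ne_zero,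
      Complex.ofReal_ne_zero] at h
    exact h.isUnit
  have hinv : (A⁻¹).map Complex.ofReal = ↑hunit.unit⁻¹ := by
    rw [Matrix.coe_units_inv, IsUnit.unit_spec]
    refine (Matrix.inv_eq_left_inv ?_).symm
    have h := congrArg Complex.ofRealHom.mapMatrix (Matrix.nonsing_inv_mul A hdet)
    rwa [map_mul, map_one] at h
  have hc : Tendsto (((A⁻¹).map Complex.ofReal) ^ ·) atTop (𝓝 0) := by
    refine Matrix.tendsto_pow_of_forall_mem_spectrum _ fun z hz => ?_
    rw [hinv, ← spectrum.map_inv, IsUnit.unit_spec, Set.mem_inv] at hz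
    have := hspec _ hz
    rw [norm_inv] at this
    have hz0 : z ≠ 0 := by rintro rfl; norm_num at this
    exact (one_lt_inv₀ (norm_pos_iff.mpr hz0)).mp this
  have hre := ((continuous_id.matrix_map Complex.continuous_re).tendsto 0).comp hc
  have hpow : ∀ N : ℕ, ((A⁻¹.map Complex.ofReal) ^ N).map Complex.re = A⁻¹ ^ N := fun N => by
    rw [show A⁻¹.map Complex.ofReal = Complex.ofRealHom.mapMatrix A⁻¹ from rfl, ← map_pow]
    ext
    simp
  simpa [Function.comp_def, hpow] using hre

theorem IsExpandingR.tendsto_inv_transpose_pow_mulVec {A : Matrix (Fin n) (Fin n) ℝ}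
    (hA : IsExpandingR A) (x : Fin n → ℝ) :
    Tendsto (fun N : ℕ => (A⁻¹)ᵀ ^ N *ᵥ x) atTop (𝓝 0) := by
  have h := ((continuous_id.matrix_transpose.matrix_mulVec
    (continuous_const (y := x))).tendsto 0).comp hA.tendsto_inv_pow
  simpa only [Function.comp_def, id, Matrix.transpose_pow, Matrix.transpose_zero,
    Matrix.zero_mulVec] using h

theorem norm_exp_two_pi_I_mul (t : ℝ) : ‖Complex.exp (2 * π * I * t)‖ = 1 := by
  simpa [mul_comm _ I, mul_assoc] using Complex.norm_exp_ofReal_mul_I (2 * π * t : ℝ)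

theorem continuous_exp_two_pi_I_mul_dotR_left (ξ : Fin n → ℝ) :
    Continuous fun x => Complex.exp (2 * π * I * (dotR x ξ)) := by
  unfold dotR; fun_prop

theorem continuous_exp_two_pi_I_mul_dotR_right (x : Fin n → ℝ) :
    Continuous fun ξ => Complex.exp (2 * π * I * (dotR x ξ)) := by
  unfold dotR; fun_prop

theorem dotR_mulVec (A : Matrix (Fin n) (Fin n) ℝ) (x ξ : Fin n → ℝ) :
    dotR (A *ᵥ x) ξ = dotR x (Aᵀ *ᵥ ξ) := by
  change (A *ᵥ x) ⬝ᵥ ξ = x ⬝ᵥ (Aᵀ *ᵥ ξ)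
  rw [Matrix.mulVec_transpose, dotProduct_comm, Matrix.dotProduct_mulVec, dotProduct_comm]

theorem continuous_FT (μ : Measure (Fin n → ℝ)) [IsFiniteMeasure μ] : Continuous (FT μ) :=
  continuous_of_dominated (bound := fun _ => 1)
    (fun ξ => (continuous_exp_two_pi_I_mul_dotR_left ξ).aestronglyMeasurable)
    (fun _ => ae_of_all _ fun _ => (norm_exp_two_pi_I_mul _).le) (integrable_const 1)
    (ae_of_all _ continuous_exp_two_pi_I_mul_dotR_right)

theorem FT_zero (μ : Measure (Fin n → ℝ)) [IsProbabilityMeasure μ] : FT μ 0 = 1 := by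
  simp [FT, dotR]

theorem FT_eq_mask_mul_FT {M : Matrix (Fin n) (Fin n) ℤ} {D : Finset (Fin n → ℤ)}
    {μ : Measure (Fin n → ℝ)} (hμ : IsSelfAffine M D μ) (ξ : Fin n → ℝ) :
    FT μ ξ = mask D (((toR M)⁻¹)ᵀ *ᵥ ξ) * FT μ (((toR M)⁻¹)ᵀ *ᵥ ξ) := by
  obtain ⟨hprob, hself⟩ := hμ
  set η := ((toR M)⁻¹)ᵀ *ᵥ ξ
  have hφ : ∀ d : Fin n → ℤ, Measurable fun x : Fin n → ℝ => (toR M)⁻¹ *ᵥ (x + vecR d) :=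
    fun d => (continuous_const.matrix_mulVec (continuous_id.add continuous_const)).measurable
  have hbranch : ∀ d : Fin n → ℤ, ∫ x, Complex.exp (2 * π * I * dotR x ξ)
      ∂(μ.map fun x => (toR M)⁻¹ *ᵥ (x + vecR d)) =
      Complex.exp (2 * π * I * dotR (vecR d) η) * FT μ η := by
    intro d
    rw [integral_map (hφ d).aemeasurable
      (continuous_exp_two_pi_I_mul_dotR_left ξ).aestronglyMeasurable, FT,
      ← integral_const_mul]
    congr 1 with x
    rw [dotR_mulVec, ← Complex.exp_add]
    congr 1
    simp only [dotR, Pi.add_apply, add_mul, Finset.sum_add_distrib]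
    push_cast
    ring
  have hint : ∀ d ∈ D, Integrable (fun x => Complex.exp (2 * π * I * dotR x ξ))
      (μ.map fun x => (toR M)⁻¹ *ᵥ (x + vecR d)) := fun d _ =>
    haveI := Measure.isProbabilityMeasure_map (μ := μ) (hφ d).aemeasurable
    (integrable_const (1 : ℝ)).mono' (continuous_exp_two_pi_I_mul_dotR_left ξ).aestronglyMeasurable
      (ae_of_all _ fun _ => (norm_exp_two_pi_I_mul _).le)
  conv_lhs => rw [FT, hself]
  rw [integral_smul_measure, integral_finsetSum_measure hint, Finset.sum_congr rfl
    fun d _ => hbranch d, ← Finset.sum_mul, mask, ENNReal.toReal_inv, Complex.real_smul]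
  simp [mul_assoc]

theorem FT_eq_prod_mask_mul_FT {M : Matrix (Fin n) (Fin n) ℤ} {D : Finset (Fin n → ℤ)}
    {μ : Measure (Fin n → ℝ)} (hμ : IsSelfAffine M D μ) (ξ : Fin n → ℝ) (N : ℕ) :
    FT μ ξ = (∏ j ∈ Finset.range N, mask D (((toR M)⁻¹)ᵀ ^ (j + 1) *ᵥ ξ)) *
      FT μ (((toR M)⁻¹)ᵀ ^ N *ᵥ ξ) := by
  induction N with
  | zero => simp
  | succ N ih =>
    rw [ih, FT_eq_mask_mul_FT hμ, Matrix.mulVec_mulVec, ← pow_succ', Finset.prod_range_succ,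
      mul_assoc]

theorem exists_pow_mulVec_mem_maskZ_of_FT_eq_zero {M : Matrix (Fin n) (Fin n) ℤ}
    (hM : IsExpanding M) {D : Finset (Fin n → ℤ)} {μ : Measure (Fin n → ℝ)}
    (hμ : IsSelfAffine M D μ) {δ : Fin n → ℝ} (hδ : FT μ δ = 0) :
    ∃ j : ℕ, ((toR M)⁻¹)ᵀ ^ (j + 1) *ᵥ δ ∈ maskZ D := by
  have := hμ.1
  have hlim : Tendsto (fun N : ℕ => FT μ (((toR M)⁻¹)ᵀ ^ N *ᵥ δ)) atTop (𝓝 1) := by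
    rw [← FT_zero μ]
    exact ((continuous_FT μ).tendsto 0).comp (hM.tendsto_inv_transpose_pow_mulVec δ)
  obtain ⟨N, hN⟩ := (hlim.eventually_ne one_ne_zero).exists
  by_contra! hmask
  have := FT_eq_prod_mask_mul_FT hμ δ N
  rw [hδ] at this
  exact mul_ne_zero (Finset.prod_ne_zero_iff.mpr fun j _ => hmask j) hN this.symm

def oddIntPoints (n : ℕ) : Set (Fin n → ℝ) :=
  {x | ∃ v : Fin n → ℤ, x = vecR v ∧ ∃ i, Odd (v i)}

theorem intCast_smul_mem_oddIntPoints {c : ℤ} (hc : Odd c) {x : Fin n → ℝ}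
    (hx : x ∈ oddIntPoints n) : (c : ℝ) • x ∈ oddIntPoints n := by
  obtain ⟨v, rfl, i, hi⟩ := hx
  exact ⟨c • v, by ext j; simp [vecR], i, by simpa using hc.mul hi⟩

theorem toR_mulVec_mem_oddIntPoints {R : Matrix (Fin n) (Fin n) ℤ} (hR : Odd R.det)
    {x : Fin n → ℝ} (hx : x ∈ oddIntPoints n) : toR R *ᵥ x ∈ oddIntPoints n := by
  obtain ⟨v, rfl, i, hi⟩ := hx
  refine ⟨R *ᵥ v, by ext j; simp [vecR, toR, Matrix.mulVec, dotProduct], ?_⟩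
  by_contra! heven
  have hker : R.map (Int.cast : ℤ → ZMod 2) *ᵥ (fun j => (v j : ZMod 2)) = 0 := by
    ext j
    have := RingHom.map_mulVec (Int.castRingHom (ZMod 2)) R v j
    rw [eq_intCast, ZMod.intCast_eq_zero_iff_even.mpr (Int.not_odd_iff_even.mp (heven j))] at this
    simpa [Function.comp_def] using this.symm
  have hdet : (R.map (Int.cast : ℤ → ZMod 2)).det ≠ 0 := by
    have := RingHom.map_det (Int.castRingHom (ZMod 2)) R
    rw [eq_intCast, ZMod.intCast_eq_one_iff_odd.mpr hR] at this
    exact fun h0 => one_ne_zero (this.trans h0)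
  refine hdet (Matrix.exists_mulVec_eq_zero_iff.mp ⟨_, fun h0 => ?_, hker⟩)
  have := congrFun h0 i
  simp only [Pi.zero_apply, ZMod.intCast_eq_zero_iff_even] at this
  exact Int.not_even_iff_odd.mpr hi this

theorem card_le_two_pow_of_sub_mem_oddIntPoints {ι : Type*} (s : Finset ι)
    (f : ι → Fin n → ℝ) (hf : ∀ a ∈ s, ∀ b ∈ s, a ≠ b → f a - f b ∈ oddIntPoints n) :
    s.card ≤ 2 ^ n := by
  rcases s.eq_empty_or_nonempty with rfl | ⟨a₀, ha₀⟩
  · simp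
  have hw : ∀ a ∈ s, ∃ w : Fin n → ℤ, f a - f a₀ = vecR w := by
    intro a ha
    by_cases h : a = a₀
    · exact ⟨0, by ext; simp [h, vecR]⟩
    · obtain ⟨v, hv, -⟩ := hf a ha a₀ ha₀ h
      exact ⟨v, hv⟩
  choose! w hw using hw
  have hg : Set.InjOn (fun a i => (w a i : ZMod 2)) s := by
    intro a ha b hb hab
    by_contra hne
    obtain ⟨v, hv, i, hi⟩ := hf a ha b hb hne
    have hvi : v i = w a i - w b i := by
      have ha' := congrFun (hw a ha) i
      have hb' := congrFun (hw b hb) i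
      have hv' := congrFun hv i
      simp only [vecR, Pi.sub_apply] at ha' hb' hv'
      exact_mod_cast (by linarith : (v i : ℝ) = w a i - w b i)
    have : ((v i : ℤ) : ZMod 2) = 0 := by
      rw [hvi, Int.cast_sub, sub_eq_zero]
      exact congrFun hab i
    exact Int.not_even_iff_odd.mpr hi (ZMod.intCast_eq_zero_iff_even.mp this)
  calc s.card ≤ (Finset.univ : Finset (Fin n → ZMod 2)).card :=
        Finset.card_le_card_of_injOn _ (fun _ _ => Finset.mem_coe.2 (Finset.mem_univ _)) hg
    _ = 2 ^ n := by simp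

theorem toR_mul (X Y : Matrix (Fin n) (Fin n) ℤ) : toR (X * Y) = toR X * toR Y :=
  map_mul (Int.castRingHom ℝ).mapMatrix X Y

theorem toR_pow (X : Matrix (Fin n) (Fin n) ℤ) (m : ℕ) : toR (X ^ m) = toR X ^ m :=
  map_pow (Int.castRingHom ℝ).mapMatrix X m

theorem toR_smul (c : ℤ) (X : Matrix (Fin n) (Fin n) ℤ) : toR (c • X) = (c : ℝ) • toR X := by
  ext
  simp only [toR, Matrix.map_apply, Matrix.smul_apply, smul_eq_mul, Int.cast_mul]

theorem det_toR (X : Matrix (Fin n) (Fin n) ℤ) : (toR X).det = X.det :=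
  ((Int.castRingHom ℝ).map_det X).symm

theorem mul_adjugate_mul_adjugate_mul_mul_transpose (M T : Matrix (Fin n) (Fin n) ℤ) :
    T * Mᵀ.adjugate * T.adjugate * T * Mᵀ = (M.det * T.det) • T := by
  simp only [mul_assoc, Matrix.adjugate_mul, Matrix.smul_mul, Matrix.mul_smul, mul_one,
    Matrix.det_transpose, smul_smul, mul_comm T.det]

theorem toR_mul_adjugate_mul_adjugate_mul_toR {M : Matrix (Fin n) (Fin n) ℤ}
    (hM : M.det ≠ 0) (T : Matrix (Fin n) (Fin n) ℤ) :
    toR (T * Mᵀ.adjugate * T.adjugate) * toR T =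
      ((M.det * T.det : ℤ) : ℝ) • (toR T * ((toR M)⁻¹)ᵀ) := by
  have hinv : toR Mᵀ * ((toR M)⁻¹)ᵀ = 1 := by
    rw [show toR Mᵀ = (toR M)ᵀ from rfl, ← Matrix.transpose_mul, Matrix.nonsing_inv_mul,
      Matrix.transpose_one]
    simpa [det_toR] using hM
  have h := congrArg toR (mul_adjugate_mul_adjugate_mul_mul_transpose M T)
  rw [toR_mul, toR_mul, toR_smul] at h
  rw [← mul_one (toR (T * Mᵀ.adjugate * T.adjugate) * toR T), ← hinv, ← mul_assoc, h,
    Matrix.smul_mul]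

theorem toR_pow_mul_toR {M : Matrix (Fin n) (Fin n) ℤ} (hM : M.det ≠ 0)
    (T : Matrix (Fin n) (Fin n) ℤ) (m : ℕ) :
    toR ((T * Mᵀ.adjugate * T.adjugate) ^ m) * toR T =
      ((M.det * T.det : ℤ) : ℝ) ^ m • (toR T * ((toR M)⁻¹)ᵀ ^ m) := by
  have h : SemiconjBy (toR T) (((M.det * T.det : ℤ) : ℝ) • ((toR M)⁻¹)ᵀ)
      (toR (T * Mᵀ.adjugate * T.adjugate)) := by
    rw [SemiconjBy, toR_mul_adjugate_mul_adjugate_mul_toR hM, Matrix.mul_smul]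
  rw [toR_pow, ← (h.pow_right m).eq, smul_pow, Matrix.mul_smul]

theorem intCast_pow_smul_mulVec_mem_oddIntPoints {M T : Matrix (Fin n) (Fin n) ℤ}
    (hM : Odd M.det) (hT : Odd T.det) {δ : Fin n → ℝ} {k N : ℕ} (hkN : k ≤ N)
    (h : toR T *ᵥ (((toR M)⁻¹)ᵀ ^ k *ᵥ δ) ∈ oddIntPoints n) :
    ((M.det * T.det : ℤ) : ℝ) ^ N • (toR T *ᵥ (((toR M)⁻¹)ᵀ ^ N *ᵥ δ)) ∈ oddIntPoints n := by
  obtain ⟨m, rfl⟩ := Nat.exists_eq_add_of_le hkN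
  have hR : Odd (T * Mᵀ.adjugate * T.adjugate).det := by
    simpa [Matrix.det_mul, Matrix.det_adjugate] using (hT.mul (hM.pow)).mul (hT.pow)
  have key : ((M.det * T.det : ℤ) : ℝ) ^ (k + m) • (toR T *ᵥ (((toR M)⁻¹)ᵀ ^ (k + m) *ᵥ δ)) =
      (((M.det * T.det) ^ k : ℤ) : ℝ) • (toR ((T * Mᵀ.adjugate * T.adjugate) ^ m) *ᵥ
        (toR T *ᵥ (((toR M)⁻¹)ᵀ ^ k *ᵥ δ))) := by
    conv_rhs => rw [Matrix.mulVec_mulVec, toR_pow_mul_toR (fun h0 => Int.not_odd_zero (h0 ▸ hM)),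
      Matrix.smul_mulVec, ← Matrix.mulVec_mulVec, Matrix.mulVec_mulVec (M := _ ^ m), ← pow_add,
      smul_smul, add_comm m, Int.cast_pow, ← pow_add]
  rw [key]
  exact intCast_smul_mem_oddIntPoints (hM.mul hT).pow
    (toR_mulVec_mem_oddIntPoints (R := (T * Mᵀ.adjugate * T.adjugate) ^ m)
      (by rw [Matrix.det_pow]; exact hR.pow) h)

theorem eq_one_or_eq_neg_one_of_one_add_add_add_inv_eq_zero {u v : ℂ} (hu : ‖u‖ = 1)
    (hv : ‖v‖ = 1) (h : 1 + u + v + (u * v)⁻¹ = 0) :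
    (u = 1 ∨ u = -1) ∧ (v = 1 ∨ v = -1) ∧ (u = -1 ∨ v = -1) := by
  have hu0 : u ≠ 0 := norm_ne_zero_iff.mp (by rw [hu]; exact one_ne_zero)
  have hv0 : v ≠ 0 := norm_ne_zero_iff.mp (by rw [hv]; exact one_ne_zero)
  have hconj : ∀ z : ℂ, ‖z‖ = 1 → conj z = z⁻¹ := fun z hz => by
    rw [Complex.inv_def, Complex.normSq_eq_norm_sq, hz]; simp
  have h' : 1 + u⁻¹ + v⁻¹ + u * v = 0 := by
    simpa [hconj u hu, hconj v hv, mul_comm v] using congrArg conj h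
  have e₁ : u * v + u ^ 2 * v + u * v ^ 2 + 1 = 0 := by
    field_simp at h; linear_combination h
  have e₂ : u * v + v + u + u ^ 2 * v ^ 2 = 0 := by
    field_simp at h'; linear_combination h'
  -- `e₁` and `e₂` are `h` and its conjugate times `u v`; together they factor
  have key : (1 + u) * (1 + v) * (1 + u * v) = 0 := by linear_combination e₁ + e₂
  rcases mul_eq_zero.mp key with huv | huv
  · rcases mul_eq_zero.mp huv with hu' | hv'
    · have hu' : u = -1 := by linear_combination hu'
      subst hu'
      rcases sq_eq_one_iff.mp (by linear_combination -e₁ : v ^ 2 = 1) with rfl | rfl <;> norm_num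
    · have hv' : v = -1 := by linear_combination hv'
      subst hv'
      rcases sq_eq_one_iff.mp (by linear_combination -e₁ : u ^ 2 = 1) with rfl | rfl <;> norm_num
  · have hvu : v = -u := by linear_combination (1 + u + v) * huv - e₁
    subst hvu
    rcases sq_eq_one_iff.mp (by linear_combination -huv : u ^ 2 = 1) with rfl | rfl <;> norm_num

theorem exp_two_pi_I_mul_eq_one_iff (t : ℝ) :
    Complex.exp (2 * π * I * t) = 1 ↔ ∃ k : ℤ, t = k := by
  rw [Complex.exp_eq_one_iff]
  refine exists_congr fun k => ⟨fun hk => ?_, fun hk => by rw [hk]; push_cast; ring⟩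
  have h2πI : 2 * π * I ≠ 0 := by simp [Real.pi_ne_zero]
  exact_mod_cast mul_left_cancel₀ h2πI (hk.trans (mul_comm _ _))

theorem exists_two_mul_eq_of_exp_two_pi_I_mul_eq {t : ℝ}
    (h : Complex.exp (2 * π * I * t) = 1 ∨ Complex.exp (2 * π * I * t) = -1) :
    ∃ p : ℤ, 2 * t = p ∧ (Complex.exp (2 * π * I * t) = -1 → Odd p) := by
  rcases h with h | h
  · obtain ⟨k, hk⟩ := (exp_two_pi_I_mul_eq_one_iff t).mp h
    exact ⟨2 * k, by rw [hk]; push_cast; ring, fun h' => by norm_num [h] at h'⟩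
  · have : Complex.exp (2 * π * I * (t - 1 / 2 : ℝ)) = 1 := by
      rw [show 2 * π * I * (t - 1 / 2 : ℝ) = 2 * π * I * t - π * I by push_cast; ring,
        Complex.exp_sub, h, Complex.exp_pi_mul_I]
      norm_num
    obtain ⟨k, hk⟩ := (exp_two_pi_I_mul_eq_one_iff _).mp this
    exact ⟨2 * k + 1, by push_cast; linarith, fun _ => odd_two_mul_add_one k⟩

theorem sum_digits {α₁ α₂ β₁ β₂ : ℤ} (hαβ : α₁ * β₂ - α₂ * β₁ ≠ 0) {A : Type*}
    [AddCommMonoid A] (f : (Fin 2 → ℤ) → A) :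
    ∑ d ∈ ({![0, 0], ![α₁, α₂], ![β₁, β₂], ![-α₁ - β₁, -α₂ - β₂]} : Finset (Fin 2 → ℤ)), f d =
      f ![0, 0] + f ![α₁, α₂] + f ![β₁, β₂] + f ![-α₁ - β₁, -α₂ - β₂] := by
  rw [Finset.sum_insert, Finset.sum_insert, Finset.sum_pair, add_assoc, add_assoc]
  all_goals
    simp only [Finset.mem_insert, Finset.mem_singleton, ne_eq, funext_iff, Fin.forall_fin_two,
      Matrix.cons_val_zero, Matrix.cons_val_one]
    grind

theorem mask_digits_eq {α₁ α₂ β₁ β₂ : ℤ} (hαβ : α₁ * β₂ - α₂ * β₁ ≠ 0) (x : Fin 2 → ℝ) :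
    mask {![0, 0], ![α₁, α₂], ![β₁, β₂], ![-α₁ - β₁, -α₂ - β₂]} x =
      4⁻¹ * (1 + Complex.exp (2 * π * I * (α₁ * x 0 + α₂ * x 1 : ℝ)) +
        Complex.exp (2 * π * I * (β₁ * x 0 + β₂ * x 1 : ℝ)) +
        (Complex.exp (2 * π * I * (α₁ * x 0 + α₂ * x 1 : ℝ)) *
          Complex.exp (2 * π * I * (β₁ * x 0 + β₂ * x 1 : ℝ)))⁻¹) := by
  rw [mask, Finset.card_eq_sum_ones, Nat.cast_sum, sum_digits hαβ, sum_digits hαβ]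
  simp only [dotR, vecR, Fin.sum_univ_two, Matrix.cons_val_zero, Matrix.cons_val_one]
  rw [← Complex.exp_add, ← Complex.exp_neg]
  norm_num
  congr 1
  ring

theorem toR_mulVec_two_smul_mem_oddIntPoints_of_mem_maskZ {α₁ α₂ β₁ β₂ : ℤ}
    (hαβ : α₁ * β₂ - α₂ * β₁ ≠ 0) {x : Fin 2 → ℝ}
    (hx : x ∈ maskZ {![0, 0], ![α₁, α₂], ![β₁, β₂], ![-α₁ - β₁, -α₂ - β₂]}) :
    toR !![α₁, α₂; β₁, β₂] *ᵥ ((2 : ℝ) • x) ∈ oddIntPoints 2 := by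
  have hx : mask _ x = 0 := hx
  rw [mask_digits_eq hαβ, mul_eq_zero] at hx
  obtain ⟨hu, hv, hodd⟩ := eq_one_or_eq_neg_one_of_one_add_add_add_inv_eq_zero
    (norm_exp_two_pi_I_mul _) (norm_exp_two_pi_I_mul _) (hx.resolve_left (by norm_num))
  obtain ⟨p, hp, hpodd⟩ := exists_two_mul_eq_of_exp_two_pi_I_mul_eq hu
  obtain ⟨q, hq, hqodd⟩ := exists_two_mul_eq_of_exp_two_pi_I_mul_eq hv
  refine ⟨![p, q], ?_, hodd.elim (fun h => ⟨0, hpodd h⟩) (fun h => ⟨1, hqodd h⟩)⟩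
  ext i
  fin_cases i
  · simp [toR, vecR, Matrix.mulVec, dotProduct, Fin.sum_univ_two, ← hp]; ring
  · simp [toR, vecR, Matrix.mulVec, dotProduct, Fin.sum_univ_two, ← hq]; ring

/-- at most 4 mutually orthogonal exponentials. -/
theorem orth_card_le_four (M : Matrix (Fin 2) (Fin 2) ℤ) (hM : IsExpanding M)
    (hdet : ¬ (2 : ℤ) ∣ M.det) (α₁ α₂ β₁ β₂ : ℤ)
    (hαβ : ¬ (2 : ℤ) ∣ (α₁ * β₂ - α₂ * β₁))
    (D : Finset (Fin 2 → ℤ))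
    (hD : D = {![0, 0], ![α₁, α₂], ![β₁, β₂], ![-α₁ - β₁, -α₂ - β₂]})
    (μ : Measure (Fin 2 → ℝ)) (hμ : IsSelfAffine M D μ)
    (Λ : Finset (Fin 2 → ℝ)) (hΛ : OrthExp μ (Λ : Set (Fin 2 → ℝ))) :
    Λ.card ≤ 4 := by
  subst hD
  set T : Matrix (Fin 2) (Fin 2) ℤ := !![α₁, α₂; β₁, β₂]
  have hT : Odd T.det := Int.not_even_iff_odd.mp (by rwa [Matrix.det_fin_two_of, even_iff_two_dvd])
  have hM' : Odd M.det := Int.not_even_iff_odd.mp (by rwa [even_iff_two_dvd])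
  have hpair : ∀ p ∈ Λ.offDiag, ∃ k,
      toR T *ᵥ (((toR M)⁻¹)ᵀ ^ k *ᵥ ((2 : ℝ) • (p.1 - p.2))) ∈ oddIntPoints 2 := by
    rintro ⟨a, b⟩ hab
    obtain ⟨ha, hb, hne⟩ := Finset.mem_offDiag.mp hab
    obtain ⟨j, hj⟩ := exists_pow_mulVec_mem_maskZ_of_FT_eq_zero hM hμ (hΛ a ha b hb hne)
    refine ⟨j + 1, ?_⟩
    simpa [Matrix.mulVec_smul] using
      toR_mulVec_two_smul_mem_oddIntPoints_of_mem_maskZ (fun h => hαβ (h ▸ dvd_zero 2)) hj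
  choose! K hK using hpair
  set N := Λ.offDiag.sup K
  have hcard := card_le_two_pow_of_sub_mem_oddIntPoints Λ
    (fun l => ((M.det * T.det : ℤ) : ℝ) ^ N • (toR T *ᵥ (((toR M)⁻¹)ᵀ ^ N *ᵥ ((2 : ℝ) • l))))
    fun a ha b hb hne => by
      have hab : (a, b) ∈ Λ.offDiag := Finset.mem_offDiag.mpr ⟨ha, hb, hne⟩
      simpa only [← smul_sub, ← Matrix.mulVec_sub] using
        intCast_pow_smul_mulVec_mem_oddIntPoints hM' hT (Finset.le_sup hab) (hK _ hab)
  simpa using hcard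

end SA
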